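/- arXiv:2309.08189 — 2 statements merged into one kernel-verified Lean document; each statement's English description precedes it below -/
import Mathlib

section
/- There is a universal constant c₂ > 0 such that for every real x and every real Δx with |Δx| > 1, |Φ(x + Δx) − Φ(x) − Φ'(x)·Δx − (1/2)·Φ''(x)·(Δx)²| ≤ (c₂/(2 + x²)) · (Δx)², where Φ is the standard normal cdf. -/
set_option maxHeartbeats 1000000


open MeasureTheory

/-- Standard normal cumulative distribution function. -/
noncomputable def stdNormalCDF (x : ℝ) : ℝ :=
  ∫ t in Set.Iic x, Real.exp (-(t ^ 2) / 2) / Real.sqrt (2 * Real.pi)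

/-- Standard normal density, the first derivative of `stdNormalCDF`. -/
noncomputable def stdNormalPDF (x : ℝ) : ℝ :=
  Real.exp (-(x ^ 2) / 2) / Real.sqrt (2 * Real.pi)

lemma integrable_stdNormalPDF : Integrable stdNormalPDF := by
  have h := (integrable_exp_neg_mul_sq (by norm_num : (0:ℝ) < 1/2)).div_const
    (Real.sqrt (2 * Real.pi))
  have he : (fun t : ℝ => Real.exp (-(1/2) * t ^ 2) / Real.sqrt (2 * Real.pi))
      = stdNormalPDF := by
    funext t; unfold stdNormalPDF; ring_nf
  rwa [he] at h

lemma integral_stdNormalPDF : ∫ t : ℝ, stdNormalPDF t = 1 := by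
  have he : (fun t : ℝ => Real.exp (-(1/2) * t ^ 2) / Real.sqrt (2 * Real.pi))
      = stdNormalPDF := by
    funext t; unfold stdNormalPDF; ring_nf
  rw [← he, integral_div, integral_gaussian]
  rw [show Real.pi / (1/2) = 2 * Real.pi by ring]
  have : Real.sqrt (2 * Real.pi) > 0 := Real.sqrt_pos.mpr (by positivity)
  field_simp

lemma stdNormalPDF_nonneg (t : ℝ) : 0 ≤ stdNormalPDF t := by
  unfold stdNormalPDF; positivity

lemma stdNormalCDF_nonneg (y : ℝ) : 0 ≤ stdNormalCDF y :=
  setIntegral_nonneg measurableSet_Iic fun t _ => stdNormalPDF_nonneg t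

lemma stdNormalCDF_le_one (y : ℝ) : stdNormalCDF y ≤ 1 := by
  rw [← integral_stdNormalPDF]
  exact setIntegral_le_integral integrable_stdNormalPDF
    (Filter.Eventually.of_forall fun t => stdNormalPDF_nonneg t)

lemma one_le_sqrt_two_pi : 1 ≤ Real.sqrt (2 * Real.pi) := by
  rw [show (1:ℝ) = Real.sqrt 1 by simp]
  exact Real.sqrt_le_sqrt (by nlinarith [Real.pi_gt_three])

theorem taylor_stdNormalCDF_large_increment :
    ∃ c₂ : ℝ, 0 < c₂ ∧ ∀ x Δ : ℝ, 1 < |Δ| →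
      |stdNormalCDF (x + Δ) - stdNormalCDF x - stdNormalPDF x * Δ -
          (1 / 2) * (-x * stdNormalPDF x) * Δ ^ 2| ≤ (c₂ / (2 + x ^ 2)) * Δ ^ 2 := by
  refine ⟨30, by norm_num, fun x Δ hΔ => ?_⟩
  set s := Real.sqrt (2 * Real.pi) with hs_def
  have hs : 1 ≤ s := one_le_sqrt_two_pi
  have hs0 : (0:ℝ) < s := by linarith
  have hΔ0 : (0:ℝ) ≤ |Δ| := abs_nonneg Δ
  have hΔ2 : 1 < Δ ^ 2 := by nlinarith [sq_abs Δ]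
  have hΔle : |Δ| ≤ Δ ^ 2 := by nlinarith [sq_abs Δ]
  have hx2 : (0:ℝ) < 2 + x ^ 2 := by positivity
  have hφ : stdNormalPDF x = Real.exp (-(x ^ 2) / 2) / s := rfl
  have hφ0 : 0 ≤ stdNormalPDF x := stdNormalPDF_nonneg x
  have hexp1 : 1 + x ^ 2 / 2 ≤ Real.exp (x ^ 2 / 2) := by
    have := Real.add_one_le_exp (x ^ 2 / 2); linarith
  have hexp8 : 1 + x ^ 2 / 8 ≤ Real.exp (x ^ 2 / 8) := by
    have := Real.add_one_le_exp (x ^ 2 / 8); linarith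
  have hexp3 : (1 + x ^ 2 / 6) ^ 3 ≤ Real.exp (x ^ 2 / 2) := by
    have h1 : 1 + x ^ 2 / 6 ≤ Real.exp (x ^ 2 / 6) := by
      have := Real.add_one_le_exp (x ^ 2 / 6); linarith
    have h2 : (0:ℝ) ≤ 1 + x ^ 2 / 6 := by positivity
    calc (1 + x ^ 2 / 6) ^ 3 ≤ Real.exp (x ^ 2 / 6) ^ 3 := pow_le_pow_left₀ h2 h1 3
      _ = Real.exp (x ^ 2 / 2) := by
          rw [← Real.exp_nat_mul]; congr 1; push_cast; ring
  have hexp_pos : (0:ℝ) < Real.exp (x ^ 2 / 2) := Real.exp_pos _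
  have hexp_inv : Real.exp (-(x ^ 2) / 2) = (Real.exp (x ^ 2 / 2))⁻¹ := by
    rw [← Real.exp_neg]; ring_nf
  -- bound B : first-order term
  have hB : stdNormalPDF x * |Δ| ≤ (2 / (2 + x ^ 2)) * Δ ^ 2 := by
    have hpdf : stdNormalPDF x ≤ 2 / (2 + x ^ 2) := by
      rw [hφ, hexp_inv, show (Real.exp (x ^ 2 / 2))⁻¹ / s
        = 1 / (Real.exp (x ^ 2 / 2) * s) by field_simp]
      rw [div_le_div_iff₀ (by positivity) hx2]
      nlinarith [mul_le_mul_of_nonneg_left hs hexp_pos.le]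
    exact mul_le_mul hpdf hΔle hΔ0 (by positivity)
  -- bound C : second-order term
  have hC : 1 / 2 * (|x| * stdNormalPDF x) * Δ ^ 2 ≤ (20 / (2 + x ^ 2)) * Δ ^ 2 := by
    have key : |x| * stdNormalPDF x ≤ 40 / (2 + x ^ 2) := by
      rw [hφ, hexp_inv, show |x| * ((Real.exp (x ^ 2 / 2))⁻¹ / s)
        = |x| / (Real.exp (x ^ 2 / 2) * s) by field_simp]
      rw [div_le_div_iff₀ (by positivity) hx2]
      have habs : |x| ≤ (1 + x ^ 2) / 2 := by
        nlinarith [sq_abs x, sq_nonneg (|x| - 1)]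
      have hpoly : (1 + x ^ 2) / 2 * (2 + x ^ 2) ≤ 40 * (1 + x ^ 2 / 6) ^ 3 := by
        nlinarith [sq_nonneg x, sq_nonneg (x ^ 2), pow_nonneg (sq_nonneg x) 3]
      have h1 : |x| * (2 + x ^ 2) ≤ 40 * Real.exp (x ^ 2 / 2) := by
        calc |x| * (2 + x ^ 2) ≤ (1 + x ^ 2) / 2 * (2 + x ^ 2) :=
              mul_le_mul_of_nonneg_right habs hx2.le
          _ ≤ 40 * (1 + x ^ 2 / 6) ^ 3 := hpoly
          _ ≤ 40 * Real.exp (x ^ 2 / 2) := by linarith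
      calc |x| * (2 + x ^ 2) ≤ 40 * Real.exp (x ^ 2 / 2) := h1
        _ ≤ 40 * (Real.exp (x ^ 2 / 2) * s) := by nlinarith
    have h2 := mul_le_mul_of_nonneg_right key (sq_nonneg Δ)
    have h3 : 1 / 2 * (|x| * stdNormalPDF x) * Δ ^ 2
        = |x| * stdNormalPDF x * Δ ^ 2 / 2 := by ring
    have h4 : (20 / (2 + x ^ 2)) * Δ ^ 2 = 40 / (2 + x ^ 2) * Δ ^ 2 / 2 := by ring
    linarith
  -- bound A : cdf increment
  have hA : |stdNormalCDF (x + Δ) - stdNormalCDF x| ≤ (8 / (2 + x ^ 2)) * Δ ^ 2 := by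
    rcases le_or_gt (x ^ 2) (4 * Δ ^ 2) with hcase | hcase
    · have h1 : |stdNormalCDF (x + Δ) - stdNormalCDF x| ≤ 1 := by
        rw [abs_sub_le_iff]
        constructor <;>
          linarith [stdNormalCDF_nonneg (x + Δ), stdNormalCDF_le_one (x + Δ),
            stdNormalCDF_nonneg x, stdNormalCDF_le_one x]
      rw [div_mul_eq_mul_div, le_div_iff₀ hx2]
      have h2 := mul_le_mul_of_nonneg_right h1 hx2.le
      nlinarith [h2]
    · have hx_big : 2 * |Δ| < |x| := by
        have h1 : (2 * |Δ|) ^ 2 < |x| ^ 2 := by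
          rw [mul_pow, sq_abs, sq_abs]; linarith
        exact lt_of_pow_lt_pow_left₀ 2 (abs_nonneg x) h1
      have heq : stdNormalCDF (x + Δ) - stdNormalCDF x
          = ∫ t in x..(x + Δ), stdNormalPDF t :=
        intervalIntegral.integral_Iic_sub_Iic
          integrable_stdNormalPDF.integrableOn integrable_stdNormalPDF.integrableOn
      have hbound : ∀ t ∈ Set.uIoc x (x + Δ),
          ‖stdNormalPDF t‖ ≤ Real.exp (-(x ^ 2) / 8) / s := by
        intro t ht
        have hlo : x - |Δ| ≤ min x (x + Δ) :=
          le_min (by linarith) (by linarith [neg_abs_le Δ])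
        have hhi : max x (x + Δ) ≤ x + |Δ| :=
          max_le (by linarith) (by linarith [le_abs_self Δ])
        have htx : |t - x| ≤ |Δ| := abs_le.mpr ⟨by linarith [ht.1], by linarith [ht.2]⟩
        have habs_t : |x| / 2 ≤ |t| := by
          have h3 : |x| - |t| ≤ |x - t| := abs_sub_abs_le_abs_sub x t
          have h4 : |x - t| = |t - x| := abs_sub_comm x t
          linarith
        have ht2 : x ^ 2 / 4 ≤ t ^ 2 := by
          nlinarith [sq_abs t, sq_abs x, abs_nonneg x, abs_nonneg t]
        rw [Real.norm_eq_abs, abs_of_nonneg (stdNormalPDF_nonneg t)]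
        unfold stdNormalPDF
        exact (div_le_div_iff_of_pos_right hs0).mpr (Real.exp_le_exp.mpr (by linarith))
      have hint : |∫ t in x..(x + Δ), stdNormalPDF t|
          ≤ Real.exp (-(x ^ 2) / 8) / s * |Δ| := by
        have := intervalIntegral.norm_integral_le_of_norm_le_const hbound
        simpa using this
      have he8 : Real.exp (-(x ^ 2) / 8) ≤ 8 / (2 + x ^ 2) := by
        have hinv : Real.exp (-(x ^ 2) / 8) * Real.exp (x ^ 2 / 8) = 1 := by
          rw [← Real.exp_add, show -(x ^ 2) / 8 + x ^ 2 / 8 = 0 by ring, Real.exp_zero]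
        rw [le_div_iff₀ hx2]
        nlinarith [hinv, hexp8, (Real.exp_pos (-(x ^ 2) / 8)).le,
          (Real.exp_pos (x ^ 2 / 8)).le]
      have hfinal : Real.exp (-(x ^ 2) / 8) / s * |Δ| ≤ (8 / (2 + x ^ 2)) * Δ ^ 2 := by
        have h1 : Real.exp (-(x ^ 2) / 8) / s ≤ Real.exp (-(x ^ 2) / 8) :=
          div_le_self (Real.exp_pos _).le hs
        have h2 : Real.exp (-(x ^ 2) / 8) / s ≤ 8 / (2 + x ^ 2) := h1.trans he8
        exact mul_le_mul h2 hΔle hΔ0 (by positivity)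
      rw [heq]
      linarith
  -- combine
  have htri : |stdNormalCDF (x + Δ) - stdNormalCDF x - stdNormalPDF x * Δ -
      1 / 2 * (-x * stdNormalPDF x) * Δ ^ 2| ≤
      |stdNormalCDF (x + Δ) - stdNormalCDF x| + stdNormalPDF x * |Δ| +
      1 / 2 * (|x| * stdNormalPDF x) * Δ ^ 2 := by
    have h1 : |stdNormalPDF x * Δ| = stdNormalPDF x * |Δ| := by
      rw [abs_mul, abs_of_nonneg hφ0]
    have h2 : |1 / 2 * (-x * stdNormalPDF x) * Δ ^ 2| =
        1 / 2 * (|x| * stdNormalPDF x) * Δ ^ 2 := by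
      rw [abs_mul, abs_mul, abs_mul, abs_neg, abs_of_nonneg hφ0, abs_pow, sq_abs]
      norm_num
    calc |stdNormalCDF (x + Δ) - stdNormalCDF x - stdNormalPDF x * Δ -
        1 / 2 * (-x * stdNormalPDF x) * Δ ^ 2|
        ≤ |stdNormalCDF (x + Δ) - stdNormalCDF x - stdNormalPDF x * Δ| +
          |1 / 2 * (-x * stdNormalPDF x) * Δ ^ 2| := abs_sub _ _
      _ ≤ |stdNormalCDF (x + Δ) - stdNormalCDF x| + |stdNormalPDF x * Δ| +
          |1 / 2 * (-x * stdNormalPDF x) * Δ ^ 2| := by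
            linarith [abs_sub (stdNormalCDF (x + Δ) - stdNormalCDF x) (stdNormalPDF x * Δ)]
      _ = _ := by rw [h1, h2]
  have hsum : (8 / (2 + x ^ 2)) * Δ ^ 2 + (2 / (2 + x ^ 2)) * Δ ^ 2
      + (20 / (2 + x ^ 2)) * Δ ^ 2 = (30 / (2 + x ^ 2)) * Δ ^ 2 := by ring
  linarith [htri, hA, hB, hC]
end

section
/- Let G : ℝ → ℝ be an integrable function of bounded variation with total variation ‖G‖_V and L¹ norm ‖G‖₁. Let X be a real random variable, and a, b real numbers with b ≠ 0. Then E[G((X + a)/b)] ≤ ‖G‖_V · sup_x |P(X ≤ x) − Φ(x)| + ‖G‖₁ · |b|, where Φ is the standard normal cdf. -/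
open MeasureTheory

/-- Kolmogorov distance between the law of `X` and the standard normal distribution. -/
noncomputable def kolDist {Ω : Type*} [MeasurableSpace Ω] (μ : Measure Ω) (X : Ω → ℝ) : ℝ :=
  ⨆ x : ℝ, |(μ {ω | X ω ≤ x}).toReal - stdNormalCDF x|

/-!
Write `H x = G ((x + a) / b)`: an affine change of variables preserves the total variation
and multiplies the `L¹` norm by `|b|`. Against a standard Gaussian `Z`, `E[H(Z)] ≤ ‖H‖₁`
because the Gaussian density is at most `1`. For the difference `E[H(X)] - E[H(Z)]`, split
`H = p - q` into monotone functions whose oscillations add up to at most `‖G‖_V`. By the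
layer-cake formula, `E[p(X)] - E[p(Z)]` is an integral over levels `t` of
`P(p(X) ≥ t) - P(p(Z) ≥ t)`, and the sets `{p ≥ t}` are half-lines, open or closed, on which
the two laws differ by at most the Kolmogorov distance (for open ones, pass to the limit).
-/

open Set Filter Topology ProbabilityTheory

theorem IsUpperSet.eq_empty_or_univ_or_Ici_or_Ioi {α : Type*} [ConditionallyCompleteLinearOrder α]
    {U : Set α} (hU : IsUpperSet U) : U = ∅ ∨ U = univ ∨ ∃ t, U = Ici t ∨ U = Ioi t := by
  rcases U.eq_empty_or_nonempty with hempty | hne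
  · exact Or.inl hempty
  by_cases hbdd : BddBelow U
  · refine Or.inr <| Or.inr ⟨sInf U, ?_⟩
    refine mem_Ici_Ioi_of_subset_of_subset (fun x hx => ?_) fun x hx => csInf_le hbdd hx
    obtain ⟨y, hyU, hyx⟩ := exists_lt_of_csInf_lt hne hx
    exact hU hyx.le hyU
  · refine Or.inr <| Or.inl <| eq_univ_of_forall fun x => ?_
    obtain ⟨y, hyU, hyx⟩ := not_bddBelow_iff.1 hbdd x
    exact hU hyx.le hyU

theorem exists_add_le_of_forall_add_le {ι κ : Type*} [Nonempty ι] [Nonempty κ] {f : ι → ℝ}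
    {g : κ → ℝ} {V : ℝ} (h : ∀ i j, f i + g j ≤ V) :
    ∃ A B, A + B ≤ V ∧ (∀ i, f i ≤ A) ∧ ∀ j, g j ≤ B := by
  obtain ⟨j₀⟩ := ‹Nonempty κ›
  have hbdd : BddAbove (range f) := ⟨V - g j₀, by rintro _ ⟨i, rfl⟩; linarith [h i j₀]⟩
  refine ⟨⨆ i, f i, V - ⨆ i, f i, by linarith, le_ciSup hbdd, fun j => ?_⟩
  have : ⨆ i, f i ≤ V - g j := ciSup_le fun i => by linarith [h i j]
  linarith

/-- Jordan decomposition with control of the oscillations: `p = (v + H) / 2`, `q = (v - H) / 2`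
for the variation function `v` of `H`. -/
theorem exists_monotone_sub_monotone_of_eVariationOn_ne_top {α : Type*} [LinearOrder α]
    [Nonempty α] {H : α → ℝ} (hH : eVariationOn H univ ≠ ⊤) :
    ∃ p q : α → ℝ, Monotone p ∧ Monotone q ∧ H = p - q ∧ ∃ Dp Dq,
      Dp + Dq ≤ (eVariationOn H univ).toReal ∧ (∀ x y, p y - p x ≤ Dp) ∧
        ∀ x y, q y - q x ≤ Dq := by
  have hloc : LocallyBoundedVariationOn H univ := fun x y _ _ =>
    ne_top_of_le_ne_top hH (eVariationOn.mono H inter_subset_left)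
  obtain ⟨a⟩ := ‹Nonempty α›
  have hvV : ∀ x y, variationOnFromTo H univ a y - variationOnFromTo H univ a x ≤
      (eVariationOn H univ).toReal := by
    intro x y
    rcases le_total x y with hxy | hyx
    · rw [← variationOnFromTo.add hloc (mem_univ a) (mem_univ x) (mem_univ y),
        add_sub_cancel_left, variationOnFromTo.eq_of_le H univ hxy]
      exact ENNReal.toReal_mono hH (eVariationOn.mono H inter_subset_left)
    · linarith [variationOnFromTo.monotoneOn hloc (mem_univ a) (mem_univ y) (mem_univ x) hyx,
        (ENNReal.toReal_nonneg : 0 ≤ (eVariationOn H univ).toReal)]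
  set p : α → ℝ := fun x => (variationOnFromTo H univ a x + H x) / 2
  set q : α → ℝ := fun x => (variationOnFromTo H univ a x - H x) / 2
  have hp : Monotone p :=
    (monotoneOn_univ.1 (variationOnFromTo.add_self_monotoneOn hloc (mem_univ a))).div_const
      zero_le_two
  have hq : Monotone q :=
    (monotoneOn_univ.1 (variationOnFromTo.sub_self_monotoneOn hloc (mem_univ a))).div_const
      zero_le_two
  have hpq : ∀ x, p x + q x = variationOnFromTo H univ a x := fun x => by ring
  obtain ⟨Dp, Dq, hD, hDp, hDq⟩ := exists_add_le_of_forall_add_le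
      (f := fun z : α × α => p z.2 - p z.1) (g := fun z : α × α => q z.2 - q z.1)
      fun ⟨x₁, y₁⟩ ⟨x₂, y₂⟩ => by
    have h₁ := hp (show x₁ ⊓ x₂ ≤ x₁ from inf_le_left)
    have h₂ := hp (show y₁ ≤ y₁ ⊔ y₂ from le_sup_left)
    have h₃ := hq (show x₁ ⊓ x₂ ≤ x₂ from inf_le_right)
    have h₄ := hq (show y₂ ≤ y₁ ⊔ y₂ from le_sup_right)
    linarith [hvV (x₁ ⊓ x₂) (y₁ ⊔ y₂), hpq (x₁ ⊓ x₂), hpq (y₁ ⊔ y₂)]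
  exact ⟨p, q, hp, hq, by ext x; simp only [p, q, Pi.sub_apply]; ring, Dp, Dq, hD,
    fun x y => hDp (x, y), fun x y => hDq (x, y)⟩

theorem measurable_of_eVariationOn_ne_top {H : ℝ → ℝ} (hH : eVariationOn H univ ≠ ⊤) :
    Measurable H := by
  obtain ⟨p, q, hp, hq, rfl, -⟩ := exists_monotone_sub_monotone_of_eVariationOn_ne_top hH
  exact hp.measurable.sub hq.measurable

theorem eVariationOn_comp_univ_of_surjective {α β E : Type*} [LinearOrder α] [LinearOrder β]
    [PseudoEMetricSpace E] (f : α → E) {φ : β → α} (hφ : Monotone φ ∨ Antitone φ)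
    (hsurj : Function.Surjective φ) : eVariationOn (f ∘ φ) univ = eVariationOn f univ := by
  rw [← hsurj.range_eq, ← image_univ]
  rcases hφ with hmono | hanti
  · exact eVariationOn.comp_eq_of_monotoneOn f φ (hmono.monotoneOn univ)
  · exact eVariationOn.comp_eq_of_antitoneOn f φ (hanti.antitoneOn univ)

theorem eVariationOn_comp_add_div {E : Type*} [PseudoEMetricSpace E] (f : ℝ → E) (a : ℝ)
    {b : ℝ} (hb : b ≠ 0) :
    eVariationOn (fun x => f ((x + a) / b)) univ = eVariationOn f univ := by
  refine eVariationOn_comp_univ_of_surjective f (φ := fun x => (x + a) / b) ?_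
    fun y => ⟨b * y - a, by field_simp; ring⟩
  rcases hb.lt_or_gt with hneg | hpos
  · exact Or.inr fun x y hxy => div_le_div_of_nonpos_of_le hneg.le (by linarith)
  · exact Or.inl fun x y hxy => div_le_div_of_nonneg_right (by linarith) hpos.le

section

variable {ν γ : Measure ℝ} {K : ℝ}

theorem abs_measureReal_Iio_sub_le [IsFiniteMeasure ν] [IsFiniteMeasure γ]
    (hK : ∀ s, |ν.real (Iic s) - γ.real (Iic s)| ≤ K) (s : ℝ) :
    |ν.real (Iio s) - γ.real (Iio s)| ≤ K := by
  obtain ⟨u, hu_mono, hu_lt, hu_lim⟩ := exists_seq_strictMono_tendsto s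
  have hmono : Monotone fun n => Iic (u n) := fun m n hmn =>
    Iic_subset_Iic.2 (hu_mono.monotone hmn)
  have hunion : ⋃ n, Iic (u n) = Iio s := iUnion_Iic_eq_Iio_of_lt_of_tendsto hu_lt hu_lim
  have hlim : ∀ ρ : Measure ℝ, IsFiniteMeasure ρ →
      Tendsto (fun n => ρ.real (Iic (u n))) atTop (𝓝 (ρ.real (Iio s))) := fun ρ _ => by
    rw [← hunion]
    exact (ENNReal.tendsto_toReal (measure_ne_top ρ _)).comp
      (tendsto_measure_iUnion_atTop hmono)
  exact le_of_tendsto ((hlim ν ‹_›).sub (hlim γ ‹_›)).abs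
    (Eventually.of_forall fun n => hK (u n))

theorem abs_measureReal_sub_le_of_isUpperSet [IsProbabilityMeasure ν] [IsProbabilityMeasure γ]
    (hK : ∀ s, |ν.real (Iic s) - γ.real (Iic s)| ≤ K) {U : Set ℝ} (hU : IsUpperSet U) :
    |ν.real U - γ.real U| ≤ K := by
  rcases hU.eq_empty_or_univ_or_Ici_or_Ioi with rfl | rfl | ⟨t, rfl | rfl⟩
  · simpa using (abs_nonneg _).trans (hK 0)
  · simpa using (abs_nonneg _).trans (hK 0)
  · rw [← compl_Iio, probReal_compl_eq_one_sub measurableSet_Iio,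
      probReal_compl_eq_one_sub measurableSet_Iio, sub_sub_sub_cancel_left, abs_sub_comm]
    exact abs_measureReal_Iio_sub_le hK t
  · rw [← compl_Iic, probReal_compl_eq_one_sub measurableSet_Iic,
      probReal_compl_eq_one_sub measurableSet_Iic, sub_sub_sub_cancel_left, abs_sub_comm]
    exact hK t

end

theorem integrable_of_forall_sub_le {μ : Measure ℝ} [IsFiniteMeasure μ] {p : ℝ → ℝ}
    (hp : Measurable p) {D : ℝ} (hD : ∀ x y, p y - p x ≤ D) : Integrable p μ :=
  .of_bound hp.aestronglyMeasurable (|p 0| + D) <| ae_of_all _ fun x => by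
    rw [Real.norm_eq_abs]
    have := abs_sub_le_iff.2 ⟨hD 0 x, hD x 0⟩
    linarith [abs_sub_abs_le_abs_sub (p x) (p 0)]

theorem integral_eq_add_integral_Ioc_measureReal_le {α : Type*} [MeasurableSpace α]
    {ρ : Measure α} [IsProbabilityMeasure ρ] {f : α → ℝ} (hf : Integrable f ρ) {c D : ℝ}
    (hc : ∀ x, c ≤ f x) (hD : ∀ x, f x ≤ c + D) :
    ∫ x, f x ∂ρ = c + ∫ t in Ioc 0 D, ρ.real {x | t ≤ f x - c} := by
  have hlayer := Integrable.integral_eq_integral_Ioc_meas_le (f := fun x => f x - c) (M := D)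
    (hf.sub (integrable_const c)) (ae_of_all _ fun x => sub_nonneg.2 (hc x))
    (ae_of_all _ fun x => by linarith [hD x])
  rw [integral_sub hf (integrable_const c), integral_const, probReal_univ, one_smul] at hlayer
  linarith

theorem integrableOn_Ioc_measureReal_le {α : Type*} [MeasurableSpace α] {ρ : Measure α}
    [IsProbabilityMeasure ρ] (f : α → ℝ) (D : ℝ) :
    IntegrableOn (fun t => ρ.real {x | t ≤ f x}) (Ioc 0 D) :=
  have hanti : Antitone fun t => ρ.real {x | t ≤ f x} := fun s t hst =>
    measureReal_mono fun x (hx : t ≤ f x) => hst.trans hx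
  .of_bound measure_Ioc_lt_top hanti.measurable.aestronglyMeasurable 1
    (ae_of_all _ fun t => by
      rw [Real.norm_eq_abs, abs_of_nonneg measureReal_nonneg]; exact measureReal_le_one)

theorem integral_sub_integral_le_of_monotone {ν γ : Measure ℝ} [IsProbabilityMeasure ν]
    [IsProbabilityMeasure γ] {K : ℝ} (hK : ∀ U, IsUpperSet U → ν.real U ≤ γ.real U + K)
    {p : ℝ → ℝ} (hp : Monotone p) {D : ℝ} (hD : ∀ x y, p y - p x ≤ D) :
    ∫ x, p x ∂ν - ∫ x, p x ∂γ ≤ D * K := by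
  have hbdd : BddBelow (range p) := ⟨p 0 - D, by rintro _ ⟨x, rfl⟩; linarith [hD x 0]⟩
  set c := ⨅ x, p x
  have hc : ∀ x, c ≤ p x := ciInf_le hbdd
  have hcD : ∀ y, p y ≤ c + D := fun y => by
    linarith [show p y - D ≤ c from le_ciInf fun x => by linarith [hD x y]]
  have hD0 : 0 ≤ D := by simpa using hD 0 0
  rw [integral_eq_add_integral_Ioc_measureReal_le (integrable_of_forall_sub_le hp.measurable hD)
      hc hcD, integral_eq_add_integral_Ioc_measureReal_le
      (integrable_of_forall_sub_le hp.measurable hD) hc hcD, add_sub_add_left_eq_sub,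
    ← integral_sub (integrableOn_Ioc_measureReal_le _ D) (integrableOn_Ioc_measureReal_le _ D)]
  calc ∫ t in Ioc 0 D, (ν.real {x | t ≤ p x - c} - γ.real {x | t ≤ p x - c})
      ≤ ∫ t in Ioc 0 D, K :=
        setIntegral_mono ((integrableOn_Ioc_measureReal_le _ D).sub
          (integrableOn_Ioc_measureReal_le _ D)) (integrableOn_const measure_Ioc_lt_top.ne)
          fun t => by
            have := hK {x | t ≤ p x - c} fun x y hxy hx =>
              hx.trans (sub_le_sub_right (hp hxy) c)
            linarith
    _ = D * K := by simp [Real.volume_real_Ioc_of_le hD0]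

theorem integral_sub_integral_le_eVariationOn_mul {ν γ : Measure ℝ} [IsProbabilityMeasure ν]
    [IsProbabilityMeasure γ] {K : ℝ} (hK : ∀ s, |ν.real (Iic s) - γ.real (Iic s)| ≤ K)
    {H : ℝ → ℝ} (hH : eVariationOn H univ ≠ ⊤) :
    ∫ x, H x ∂ν - ∫ x, H x ∂γ ≤ (eVariationOn H univ).toReal * K := by
  obtain ⟨p, q, hp, hq, rfl, Dp, Dq, hDV, hDp, hDq⟩ :=
    exists_monotone_sub_monotone_of_eVariationOn_ne_top hH
  have hUpper := fun U (hU : IsUpperSet U) =>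
    abs_le.1 (abs_measureReal_sub_le_of_isUpperSet hK hU)
  have hpK := integral_sub_integral_le_of_monotone (ν := ν) (γ := γ) (K := K)
    (fun U hU => by linarith [(hUpper U hU).2]) hp hDp
  have hqK := integral_sub_integral_le_of_monotone (ν := γ) (γ := ν) (K := K)
    (fun U hU => by linarith [(hUpper U hU).1]) hq hDq
  have hK0 : 0 ≤ K := (abs_nonneg _).trans (hK 0)
  have hint : ∀ ρ : Measure ℝ, IsProbabilityMeasure ρ →
      ∫ x, (p - q) x ∂ρ = ∫ x, p x ∂ρ - ∫ x, q x ∂ρ := fun ρ _ =>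
    integral_sub (integrable_of_forall_sub_le hp.measurable hDp)
      (integrable_of_forall_sub_le hq.measurable hDq)
  calc ∫ x, (p - q) x ∂ν - ∫ x, (p - q) x ∂γ
      = (∫ x, p x ∂ν - ∫ x, p x ∂γ) + (∫ x, q x ∂γ - ∫ x, q x ∂ν) := by
        rw [hint ν ‹_›, hint γ ‹_›]; ring
    _ ≤ (Dp + Dq) * K := by linarith
    _ ≤ (eVariationOn (p - q) univ).toReal * K := mul_le_mul_of_nonneg_right hDV hK0

theorem gaussianPDFReal_one_le_one (m x : ℝ) : gaussianPDFReal m 1 x ≤ 1 := by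
  rw [gaussianPDFReal_def]
  have hsqrt : 1 ≤ √(2 * Real.pi * (1 : NNReal)) := by
    rw [NNReal.coe_one, mul_one, Real.one_le_sqrt]; linarith [Real.pi_gt_three]
  have hexp : Real.exp (-(x - m) ^ 2 / (2 * (1 : NNReal))) ≤ 1 :=
    Real.exp_le_one_iff.2 (by push_cast; nlinarith [sq_nonneg (x - m)])
  calc (√(2 * Real.pi * (1 : NNReal)))⁻¹ * Real.exp (-(x - m) ^ 2 / (2 * (1 : NNReal)))
      ≤ 1 * 1 := by gcongr; exact inv_le_one_of_one_le₀ hsqrt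
    _ = 1 := one_mul 1

theorem integral_gaussianReal_le_integral_abs {f : ℝ → ℝ} (hf : Integrable f) (m : ℝ) :
    ∫ x, f x ∂gaussianReal m 1 ≤ ∫ x, |f x| :=
  calc ∫ x, f x ∂gaussianReal m 1 ≤ ∫ x, |f x| ∂gaussianReal m 1 :=
        (le_abs_self _).trans (by simpa using norm_integral_le_integral_norm f)
    _ = ∫ x, gaussianPDFReal m 1 x * |f x| := integral_gaussianReal_eq_integral_smul one_ne_zero
    _ ≤ ∫ x, |f x| := integral_mono_of_nonneg
        (ae_of_all _ fun x => mul_nonneg (gaussianPDFReal_nonneg _ _ x) (abs_nonneg _)) hf.abs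
        (ae_of_all _ fun x =>
          mul_le_of_le_one_left (abs_nonneg _) (gaussianPDFReal_one_le_one m x))

theorem gaussianReal_real_Iic (s : ℝ) : (gaussianReal 0 1).real (Iic s) = stdNormalCDF s := by
  rw [measureReal_def, gaussianReal_apply_eq_integral 0 one_ne_zero,
    ENNReal.toReal_ofReal (setIntegral_nonneg measurableSet_Iic fun x _ =>
      gaussianPDFReal_nonneg 0 1 x)]
  refine setIntegral_congr_fun measurableSet_Iic fun t _ => ?_
  simp [gaussianPDFReal, div_eq_inv_mul]

theorem abs_sub_stdNormalCDF_le_kolDist {Ω : Type*} [MeasurableSpace Ω] (μ : Measure Ω)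
    [IsProbabilityMeasure μ] (X : Ω → ℝ) (s : ℝ) :
    |(μ {ω | X ω ≤ s}).toReal - stdNormalCDF s| ≤ kolDist μ X := by
  refine le_ciSup (f := fun x => |(μ {ω | X ω ≤ x}).toReal - stdNormalCDF x|) ⟨1, ?_⟩ s
  rintro _ ⟨x, rfl⟩
  dsimp only
  rw [← gaussianReal_real_Iic]
  exact abs_sub_le_of_nonneg_of_le ENNReal.toReal_nonneg measureReal_le_one
    measureReal_nonneg measureReal_le_one

theorem integral_comp_add_div (f : ℝ → ℝ) (a b : ℝ) :
    ∫ x, f ((x + a) / b) = |b| * ∫ x, f x := by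
  rw [integral_add_right_eq_self (fun x => f (x / b)) a, Measure.integral_comp_div, smul_eq_mul]

/-- Bolthausen's Lemma 2: for an integrable function `G` of bounded variation,
`E[G((X+a)/b)] ≤ ‖G‖_V ⋅ K(X) + ‖G‖₁ ⋅ |b|`. -/
theorem bolthausen_bv_lemma {Ω : Type*} [MeasurableSpace Ω] (μ : Measure Ω)
    [IsProbabilityMeasure μ] (G : ℝ → ℝ) (hGint : Integrable G volume)
    (hGBV : eVariationOn G Set.univ ≠ ⊤)
    (X : Ω → ℝ) (hX : Measurable X) (a b : ℝ) (hb : b ≠ 0) :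
    (∫ ω, G ((X ω + a) / b) ∂μ) ≤
      (eVariationOn G Set.univ).toReal * kolDist μ X + (∫ x : ℝ, |G x|) * |b| := by
  set H : ℝ → ℝ := fun x => G ((x + a) / b)
  have hHV : eVariationOn H univ = eVariationOn G univ := eVariationOn_comp_add_div G a hb
  have hHBV : eVariationOn H univ ≠ ⊤ := hHV ▸ hGBV
  have : IsProbabilityMeasure (μ.map X) := Measure.isProbabilityMeasure_map hX.aemeasurable
  have hlaw : ∫ ω, H (X ω) ∂μ = ∫ x, H x ∂μ.map X := (integral_map hX.aemeasurable
    (measurable_of_eVariationOn_ne_top hHBV).aestronglyMeasurable).symm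
  have hK : ∀ s, |(μ.map X).real (Iic s) - (gaussianReal 0 1).real (Iic s)| ≤ kolDist μ X :=
    fun s => by
      rw [map_measureReal_apply hX measurableSet_Iic, gaussianReal_real_Iic]
      exact abs_sub_stdNormalCDF_le_kolDist μ X s
  have hcompare : ∫ x, H x ∂μ.map X - ∫ x, H x ∂gaussianReal 0 1 ≤
      (eVariationOn G univ).toReal * kolDist μ X :=
    hHV ▸ integral_sub_integral_le_eVariationOn_mul hK hHBV
  have hgauss : ∫ x, H x ∂gaussianReal 0 1 ≤ (∫ x, |G x|) * |b| := by
    refine (integral_gaussianReal_le_integral_abs ((hGint.comp_div hb).comp_add_right a) 0).trans ?_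
    rw [integral_comp_add_div (fun x => |G x|), mul_comm]
  linarith
end
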